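/- Under any adaptive strategy P⃗ⁿ for discriminating channels W and W̄ on finite alphabets, for every s ∈ ℝ the cumulant generating function satisfies the chain rule φ(s | Q_{W,P⃗ⁿ} ‖ Q_{W̄,P⃗ⁿ}) = φ(s | Q_{W,P⃗^{n-1}} ‖ Q_{W̄,P⃗^{n-1}}) + φ(s | W ‖ W̄ | P_{s,W|W̄,P⃗ⁿ}), where P_{s,W|W̄,P⃗ⁿ} is the distribution of the n-th input under the tilted distribution Q_{s,W|W̄,P⃗^{n-1}}, and consequently φ(s | Q_{W,P⃗ⁿ} ‖ Q_{W̄,P⃗ⁿ}) ≤ n · sup_{x∈X} φ(s | W_x ‖ W̄_x) for all s ≤ 0. -/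

import Mathlib

open Filter

/-- `W` is a (classical) channel from `X` to `Y` with full-support outputs. -/
def IsChannel {X Y : Type*} [Fintype Y] (W : X → Y → ℝ) : Prop :=
  ∀ x, (∀ y, 0 < W x y) ∧ ∑ y, W x y = 1

/-- An adaptive strategy: for each step `k`, a conditional distribution of the
`(k+1)`-st input given the first `k` input-output pairs. -/
def IsStrategy {X Y : Type*} [Fintype X]
    (strat : (k : ℕ) → (Fin k → X × Y) → X → ℝ) : Prop :=
  ∀ k h, (∀ x, 0 ≤ strat k h x) ∧ ∑ x, strat k h x = 1

/-- Joint distribution of `n` adaptive input-output pairs under channel `W`. -/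
noncomputable def Qdist {X Y : Type*} [Fintype X] [Fintype Y] (W : X → Y → ℝ)
    (strat : (k : ℕ) → (Fin k → X × Y) → X → ℝ) (n : ℕ) (h : Fin n → X × Y) : ℝ :=
  ∏ k : Fin n,
    strat k.1 (fun j : Fin k.1 => h ⟨j.1, j.2.trans k.2⟩) (h k).1 * W (h k).1 (h k).2

/-- Marginal distribution of the `(k+1)`-st input under channel `W`. -/
noncomputable def inMarg {X Y : Type*} [Fintype X] [Fintype Y] (W : X → Y → ℝ)
    (strat : (k : ℕ) → (Fin k → X × Y) → X → ℝ) (k : ℕ) (x : X) : ℝ :=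
  ∑ h : Fin k → X × Y, Qdist W strat k h * strat k h x

/-- Kullback–Leibler divergence of finitely supported distributions. -/
noncomputable def Dkl {α : Type*} [Fintype α] (P Q : α → ℝ) : ℝ :=
  ∑ a, P a * Real.log (P a / Q a)

/-- `φ(s|P‖Q) = log ∑ Q^s P^{1-s}`. -/
noncomputable def phiRel {α : Type*} [Fintype α] (s : ℝ) (P Q : α → ℝ) : ℝ :=
  Real.log (∑ a, Q a ^ s * P a ^ (1 - s))

/-- Density of the tilted distribution of the first `n` pairs. -/
noncomputable def Qtilt {X Y : Type*} [Fintype X] [Fintype Y] (s : ℝ) (W Wb : X → Y → ℝ)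
    (strat : (k : ℕ) → (Fin k → X × Y) → X → ℝ) (n : ℕ) (h : Fin n → X × Y) : ℝ :=
  Qdist Wb strat n h ^ s * Qdist W strat n h ^ (1 - s) /
    ∑ g : Fin n → X × Y, Qdist Wb strat n g ^ s * Qdist W strat n g ^ (1 - s)

/-- Distribution of the `(k+1)`-st input under the tilted distribution. -/
noncomputable def Ptilt {X Y : Type*} [Fintype X] [Fintype Y] (s : ℝ) (W Wb : X → Y → ℝ)
    (strat : (k : ℕ) → (Fin k → X × Y) → X → ℝ) (k : ℕ) (x : X) : ℝ :=
  ∑ h : Fin k → X × Y, Qtilt s W Wb strat k h * strat k h x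

/-- `φ(s|W‖W̄|P) = log ∑_x P(x) ∑_y W̄_x(y)^s W_x(y)^{1-s}`. -/
noncomputable def phiChan {X Y : Type*} [Fintype X] [Fintype Y] (s : ℝ)
    (W Wb : X → Y → ℝ) (P : X → ℝ) : ℝ :=
  Real.log (∑ x, P x * ∑ y, Wb x y ^ s * W x y ^ (1 - s))


/-! The partition function `Z n = ∑ Q̄ⁿ ^ s Qⁿ ^ (1 - s)` of the tilted distribution satisfies
`Z (n + 1) = Z n · ∑ₓ P_{s,n}(x) ∑_y W̄ₓ(y) ^ s Wₓ(y) ^ (1 - s)`: summing out the last output only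
sees the strategy's next input, whose tilted law is `P_{s,n}`. Taking logarithms gives the chain
rule, and bounding each step by the worst input and summing gives the linear bound. -/

open Real Finset

lemma sum_pi_fin_succ_eq_sum_snoc {Z : Type*} [Fintype Z] (n : ℕ) (f : (Fin (n + 1) → Z) → ℝ) :
    ∑ h, f h = ∑ g : Fin n → Z, ∑ p : Z, f (Fin.snoc g p) := by
  rw [← (Fin.snocEquiv fun _ => Z).sum_comp, Fintype.sum_prod_type, sum_comm]
  rfl

lemma sum_mul_pos_of_sum_eq_one {α : Type*} [Fintype α] {P c : α → ℝ} (hP : ∀ a, 0 ≤ P a)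
    (hP1 : ∑ a, P a = 1) (hc : ∀ a, 0 < c a) : 0 < ∑ a, P a * c a := by
  obtain ⟨a, -, ha⟩ := exists_ne_zero_of_sum_ne_zero (hP1 ▸ one_ne_zero : ∑ a, P a ≠ 0)
  exact sum_pos' (fun a _ => mul_nonneg (hP a) (hc a).le)
    ⟨a, mem_univ a, mul_pos ((hP a).lt_of_ne' ha) (hc a)⟩

lemma log_sum_mul_le_iSup_log {α : Type*} [Fintype α] {P c : α → ℝ} (hP : ∀ a, 0 ≤ P a)
    (hP1 : ∑ a, P a = 1) (hc : ∀ a, 0 < c a) :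
    log (∑ a, P a * c a) ≤ ⨆ a, log (c a) := by
  rw [log_le_iff_le_exp (sum_mul_pos_of_sum_eq_one hP hP1 hc)]
  have hc_le : ∀ a, c a ≤ exp (⨆ a, log (c a)) := fun a =>
    (log_le_iff_le_exp (hc a)).mp
      (le_ciSup (f := fun a => log (c a)) (Set.finite_range _).bddAbove a)
  calc ∑ a, P a * c a ≤ ∑ a, P a * exp (⨆ a, log (c a)) :=
        sum_le_sum fun a _ => mul_le_mul_of_nonneg_left (hc_le a) (hP a)
    _ = exp (⨆ a, log (c a)) := by rw [← sum_mul, hP1, one_mul]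

section Tilting

variable {X Y : Type*} [Fintype Y] {W Wb : X → Y → ℝ}

lemma IsChannel.sum_rpow_mul_rpow_pos (hW : IsChannel W) (hWb : IsChannel Wb)
    (s : ℝ) (x : X) : 0 < ∑ y, Wb x y ^ s * W x y ^ (1 - s) := by
  obtain ⟨y, -, -⟩ := exists_ne_zero_of_sum_ne_zero ((hW x).2 ▸ one_ne_zero : ∑ y, W x y ≠ 0)
  exact sum_pos' (fun y _ => by have := (hW x).1 y; have := (hWb x).1 y; positivity)
    ⟨y, mem_univ y, by have := (hW x).1 y; have := (hWb x).1 y; positivity⟩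

variable [Fintype X] {strat : (k : ℕ) → (Fin k → X × Y) → X → ℝ}

lemma phiChan_le_iSup_phiRel (hW : IsChannel W) (hWb : IsChannel Wb)
    (s : ℝ) {P : X → ℝ} (hP : ∀ x, 0 ≤ P x) (hP1 : ∑ x, P x = 1) :
    phiChan s W Wb P ≤ ⨆ x, phiRel s (W x) (Wb x) :=
  log_sum_mul_le_iSup_log hP hP1 (hW.sum_rpow_mul_rpow_pos hWb s)

lemma Qdist_snoc (n : ℕ) (g : Fin n → X × Y) (p : X × Y) :
    Qdist W strat (n + 1) (Fin.snoc g p) = Qdist W strat n g * (strat n g p.1 * W p.1 p.2) := by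
  rw [Qdist, Fin.prod_univ_castSucc]
  congr 1
  · refine prod_congr rfl fun k _ => ?_
    have hk : ∀ j : Fin k, (j : ℕ) < n := fun j => j.2.trans k.2
    simp [Fin.snoc, hk]
  · simp [Fin.snoc]

lemma Qdist_nonneg (hW : IsChannel W) (hstrat : IsStrategy strat) (n : ℕ) (h : Fin n → X × Y) :
    0 ≤ Qdist W strat n h :=
  prod_nonneg fun _ _ => mul_nonneg ((hstrat _ _).1 _) ((hW _).1 _).le

noncomputable def tiltPartition (s : ℝ) (W Wb : X → Y → ℝ)
    (strat : (k : ℕ) → (Fin k → X × Y) → X → ℝ) (n : ℕ) : ℝ :=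
  ∑ h : Fin n → X × Y, Qdist Wb strat n h ^ s * Qdist W strat n h ^ (1 - s)

lemma phiRel_Qdist_eq_log_tiltPartition (s : ℝ) (n : ℕ) :
    phiRel s (Qdist W strat n) (Qdist Wb strat n) = log (tiltPartition s W Wb strat n) :=
  rfl

lemma tiltPartition_zero (s : ℝ) : tiltPartition s W Wb strat 0 = 1 := by
  simp [tiltPartition, Qdist]

lemma tiltPartition_succ (hW : IsChannel W) (hWb : IsChannel Wb) (hstrat : IsStrategy strat)
    (s : ℝ) (n : ℕ) :
    tiltPartition s W Wb strat (n + 1) = ∑ g, Qdist Wb strat n g ^ s * Qdist W strat n g ^ (1 - s) *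
      ∑ x, strat n g x * ∑ y, Wb x y ^ s * W x y ^ (1 - s) := by
  rw [tiltPartition, sum_pi_fin_succ_eq_sum_snoc]
  refine sum_congr rfl fun g _ => ?_
  simp only [Fintype.sum_prod_type, mul_sum, Qdist_snoc]
  refine sum_congr rfl fun x _ => sum_congr rfl fun y _ => ?_
  have hst := (hstrat n g).1 x
  rw [mul_rpow (Qdist_nonneg hWb hstrat n g) (by have := (hWb x).1 y; positivity),
    mul_rpow (Qdist_nonneg hW hstrat n g) (by have := (hW x).1 y; positivity),
    mul_rpow hst ((hWb x).1 y).le, mul_rpow hst ((hW x).1 y).le]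
  -- `a ^ s * a ^ (1 - s) = a` also at `a = 0`, since the exponents add up to `1 ≠ 0`
  have hsplit : strat n g x ^ s * strat n g x ^ (1 - s) = strat n g x := by
    rw [← rpow_add' hst (by norm_num), add_sub_cancel, rpow_one]
  linear_combination (Qdist Wb strat n g ^ s * Qdist W strat n g ^ (1 - s) * Wb x y ^ s *
    W x y ^ (1 - s)) * hsplit

lemma sum_Ptilt_mul (s : ℝ) (n : ℕ) (f : X → ℝ) :
    ∑ x, Ptilt s W Wb strat n x * f x =
      (∑ g, Qdist Wb strat n g ^ s * Qdist W strat n g ^ (1 - s) * ∑ x, strat n g x * f x) /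
        tiltPartition s W Wb strat n := by
  simp only [Ptilt, Qtilt, sum_mul, mul_sum, sum_div]
  rw [sum_comm]
  refine sum_congr rfl fun g _ => sum_congr rfl fun x _ => ?_
  rw [tiltPartition]
  ring

lemma Ptilt_nonneg (hW : IsChannel W) (hWb : IsChannel Wb) (hstrat : IsStrategy strat)
    (s : ℝ) (n : ℕ) (x : X) : 0 ≤ Ptilt s W Wb strat n x := by
  have hQ := Qdist_nonneg hW hstrat n
  have hQb := Qdist_nonneg hWb hstrat n
  have hZ : 0 ≤ tiltPartition s W Wb strat n :=
    sum_nonneg fun h _ => by have := hQ h; have := hQb h; positivity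
  exact sum_nonneg fun h _ => mul_nonneg
    (div_nonneg (by have := hQ h; have := hQb h; positivity) hZ) ((hstrat n h).1 x)

lemma sum_Ptilt (hstrat : IsStrategy strat) (s : ℝ) (n : ℕ)
    (hZ : tiltPartition s W Wb strat n ≠ 0) : ∑ x, Ptilt s W Wb strat n x = 1 := by
  have h := sum_Ptilt_mul (W := W) (Wb := Wb) (strat := strat) s n 1
  simp only [Pi.one_apply, mul_one, (hstrat n _).2] at h
  exact h.trans (div_self hZ)

lemma sum_Ptilt_mul_sum_rpow (hW : IsChannel W) (hWb : IsChannel Wb) (hstrat : IsStrategy strat)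
    (s : ℝ) (n : ℕ) :
    ∑ x, Ptilt s W Wb strat n x * ∑ y, Wb x y ^ s * W x y ^ (1 - s) =
      tiltPartition s W Wb strat (n + 1) / tiltPartition s W Wb strat n := by
  rw [sum_Ptilt_mul, tiltPartition_succ hW hWb hstrat]

lemma tiltPartition_pos (hW : IsChannel W) (hWb : IsChannel Wb) (hstrat : IsStrategy strat)
    (s : ℝ) (n : ℕ) : 0 < tiltPartition s W Wb strat n := by
  induction n with
  | zero => simp [tiltPartition_zero]
  | succ n ih =>
    have hstep : 0 < ∑ x, Ptilt s W Wb strat n x * ∑ y, Wb x y ^ s * W x y ^ (1 - s) :=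
      sum_mul_pos_of_sum_eq_one (Ptilt_nonneg hW hWb hstrat s n) (sum_Ptilt hstrat s n ih.ne')
        (hW.sum_rpow_mul_rpow_pos hWb s)
    rw [sum_Ptilt_mul_sum_rpow hW hWb hstrat] at hstep
    exact (div_pos_iff_of_pos_right ih).mp hstep

lemma phiRel_Qdist_succ (hW : IsChannel W) (hWb : IsChannel Wb) (hstrat : IsStrategy strat)
    (s : ℝ) (n : ℕ) :
    phiRel s (Qdist W strat (n + 1)) (Qdist Wb strat (n + 1)) =
      phiRel s (Qdist W strat n) (Qdist Wb strat n) + phiChan s W Wb (Ptilt s W Wb strat n) := by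
  rw [phiRel_Qdist_eq_log_tiltPartition, phiRel_Qdist_eq_log_tiltPartition, phiChan,
    sum_Ptilt_mul_sum_rpow hW hWb hstrat, log_div (tiltPartition_pos hW hWb hstrat s (n + 1)).ne'
    (tiltPartition_pos hW hWb hstrat s n).ne', add_sub_cancel]

lemma phiRel_Qdist_le (hW : IsChannel W) (hWb : IsChannel Wb) (hstrat : IsStrategy strat)
    (s : ℝ) (n : ℕ) :
    phiRel s (Qdist W strat n) (Qdist Wb strat n) ≤ n * ⨆ x, phiRel s (W x) (Wb x) := by
  induction n with
  | zero => simp [phiRel_Qdist_eq_log_tiltPartition, tiltPartition_zero]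
  | succ n ih =>
    rw [phiRel_Qdist_succ hW hWb hstrat, Nat.cast_succ, add_one_mul]
    exact add_le_add ih (phiChan_le_iSup_phiRel hW hWb s (Ptilt_nonneg hW hWb hstrat s n)
      (sum_Ptilt hstrat s n (tiltPartition_pos hW hWb hstrat s n).ne'))

end Tilting

theorem stmt9_general {X Y : Type*} [Fintype X] [Fintype Y]
    (W Wb : X → Y → ℝ) (hW : IsChannel W) (hWb : IsChannel Wb)
    (strat : (k : ℕ) → (Fin k → X × Y) → X → ℝ) (hstrat : IsStrategy strat) :
    (∀ s : ℝ, ∀ n : ℕ,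
      phiRel s (Qdist W strat (n + 1)) (Qdist Wb strat (n + 1)) =
        phiRel s (Qdist W strat n) (Qdist Wb strat n) +
          phiChan s W Wb (Ptilt s W Wb strat n)) ∧
    (∀ s : ℝ, s ≤ 0 → ∀ n : ℕ,
      phiRel s (Qdist W strat n) (Qdist Wb strat n) ≤
        n * ⨆ x, phiRel s (W x) (Wb x)) :=
  ⟨phiRel_Qdist_succ hW hWb hstrat, fun s _ => phiRel_Qdist_le hW hWb hstrat s⟩

theorem stmt9 {X Y : Type*} [Fintype X] [Fintype Y] [Nonempty X]
    (W Wb : X → Y → ℝ) (hW : IsChannel W) (hWb : IsChannel Wb)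
    (strat : (k : ℕ) → (Fin k → X × Y) → X → ℝ) (hstrat : IsStrategy strat) :
    (∀ s : ℝ, ∀ n : ℕ,
      phiRel s (Qdist W strat (n + 1)) (Qdist Wb strat (n + 1)) =
        phiRel s (Qdist W strat n) (Qdist Wb strat n) +
          phiChan s W Wb (Ptilt s W Wb strat n)) ∧
    (∀ s : ℝ, s ≤ 0 → ∀ n : ℕ,
      phiRel s (Qdist W strat n) (Qdist Wb strat n) ≤
        n * ⨆ x, phiRel s (W x) (Wb x)) :=
  stmt9_general W Wb hW hWb strat hstrat
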